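/- For every m ≥ 2: (1) the word B_m occurs in the concatenation B_m B_{m−1} B_{m+1} B_m at exactly two positions, namely 1 and 7·2^{m−1}+1; (2) the word B_m occurs in the concatenation B_m B_{m−1} B_m at exactly two positions, namely 1 and 3·2^{m−1}+1. -/

import Mathlib

namespace PD

/-- The period-doubling substitution on the alphabet `Bool`,
where `false` stands for the letter `a` and `true` for the letter `b`:
`σ(a) = ab`, `σ(b) = aa`. -/
def sub : Bool → List Bool
  | false => [false, true]
  | true  => [false, false]

/-- The substitution applied to a finite word. -/
def subW (w : List Bool) : List Bool := w.flatMap sub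

/-- `A m = σ^m(a)`. -/
def A (m : ℕ) : List Bool := subW^[m] [false]

/-- `B m = σ^m(b)`. -/
def B (m : ℕ) : List Bool := subW^[m] [true]

/-- The doubling sequence `D∞` (0-indexed: `D n` is the `(n+1)`-th letter),
the fixed point of `σ` beginning with `a`; `A m` is a prefix of `A (m+1)`,
and `A (n+1)` has length `2^(n+1) > n`. -/
def D (n : ℕ) : Bool := (A (n + 1)).getD n false

/-- `δ m`, the last letter of `A m`. -/
def delta (m : ℕ) : Bool := (A m).getLastD false

/-- The envelope words (`i ∈ {1,2}`): `E m 1 = A m` minus its last letter,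
`E m 2 = A (m-1) ++ (A m` minus its last letter `)`. -/
def E (m i : ℕ) : List Bool :=
  if i = 1 then (A m).dropLast else A (m - 1) ++ (A m).dropLast

/-- `w` occurs at the (1-indexed) position `j` in the finite word `τ`. -/
def OccursIn (w τ : List Bool) (j : ℕ) : Prop :=
  1 ≤ j ∧ (τ.drop (j - 1)).take w.length = w

/-- `w` occurs at the (1-indexed) position `j` in the doubling sequence. -/
def OccursD (w : List Bool) (j : ℕ) : Prop :=
  1 ≤ j ∧ ∀ k < w.length, D (j - 1 + k) = w.getD k false

/-- `w` is a factor of the doubling sequence. -/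
def FactorD (w : List Bool) : Prop := ∃ j, OccursD w j

/-- `L w p`: the (1-indexed) starting position of the `p`-th occurrence of `w`
in the doubling sequence, occurrences being ordered by starting position.
(Each factor occurs infinitely often, so `Nat.nth` enumerates all occurrences
in increasing order.) -/
noncomputable def L (w : List Bool) (p : ℕ) : ℕ := Nat.nth (OccursD w) (p - 1)

/-- The strict total order on envelope words:
`E m₁ i₁ ⊏ E m₂ i₂` iff `m₁ < m₂`, or `m₁ = m₂` and `i₁ < i₂`. -/
def EnvLt (m₁ i₁ m₂ i₂ : ℕ) : Prop := m₁ < m₂ ∨ (m₁ = m₂ ∧ i₁ < i₂)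

/-- `Env(w) = E m i`: the envelope word `E m i` is the `⊏`-minimal envelope
word containing `w` as a factor. -/
def IsEnv (w : List Bool) (m i : ℕ) : Prop :=
  1 ≤ m ∧ (i = 1 ∨ i = 2) ∧ w <:+: E m i ∧
    ∀ m' i', 1 ≤ m' → (i' = 1 ∨ i' = 2) → EnvLt m' i' m i → ¬ w <:+: E m' i'

/-- The substitution `φ₁(a) = a`, `φ₁(b) = bb`. -/
def phi1 : Bool → List Bool
  | false => [false]
  | true  => [true, true]

/-- `Θ₁ = φ₁(D∞)` (0-indexed): `φ₁(A (n+1))` is a prefix of `Θ₁` of length `> n`. -/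
def Theta1 (n : ℕ) : Bool := ((A (n + 1)).flatMap phi1).getD n false

/-- The substitution `φ₂(a) = ab`, `φ₂(b) = acac`, over the alphabet `Fin 3`
where `0` stands for `a`, `1` for `b` and `2` for `c`. -/
def phi2 : Bool → List (Fin 3)
  | false => [0, 1]
  | true  => [0, 2, 0, 2]

/-- `Θ₂ = φ₂(D∞)` (0-indexed). -/
def Theta2 (n : ℕ) : Fin 3 := ((A (n + 1)).flatMap phi2).getD n 0

/-- `N₁(x,p)`: the number of letters `x` among the first `p` letters of `Θ₁`. -/
def N1 (x : Bool) (p : ℕ) : ℕ := ((List.range p).map Theta1).count x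

/-- `N₂(x,p)`: the number of letters `x` among the first `p` letters of `Θ₂`. -/
def N2 (x : Fin 3) (p : ℕ) : ℕ := ((List.range p).map Theta2).count x

end PD

/-!
Both words are images under `σ` of the corresponding words one level down, and so is `B m`.
Since `σ(W)` has `a` at every odd position and `B m` begins with `ab` for `m ≥ 1`, the occurrences
of `B (m + 1)` in `σ(W)` are exactly the images `j ↦ 2j - 1` of the occurrences of `B m` in `W`.
The positions therefore double (minus one) with each level, starting from a direct check at `m = 1`.
-/

namespace PD

lemma subW_append (u v : List Bool) : subW (u ++ v) = subW u ++ subW v :=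
  List.flatMap_append

lemma length_subW (w : List Bool) : (subW w).length = 2 * w.length := by
  induction w with
  | nil => rfl
  | cons x w ih => cases x <;> simp [subW, sub] at ih ⊢ <;> omega

lemma take_subW (w : List Bool) (k : ℕ) : (subW w).take (2 * k) = subW (w.take k) := by
  induction w generalizing k with
  | nil => simp [subW]
  | cons x w ih =>
    cases k with
    | zero => simp [subW]
    | succ k => cases x <;> simpa [subW, sub, Nat.mul_succ] using ih k

lemma drop_subW (w : List Bool) (k : ℕ) : (subW w).drop (2 * k) = subW (w.drop k) := by
  induction w generalizing k with
  | nil => simp [subW]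
  | cons x w ih =>
    cases k with
    | zero => simp
    | succ k => cases x <;> simpa [subW, sub, Nat.mul_succ] using ih k

lemma subW_injective : Function.Injective subW := by
  intro u v h
  induction u generalizing v with
  | nil => cases v with
    | nil => rfl
    | cons y v => cases y <;> simp [subW, sub] at h
  | cons x u ih => cases v with
    | nil => cases x <;> simp [subW, sub] at h
    | cons y v => cases x <;> cases y <;> simp [subW, sub] at h ⊢ <;> exact ih h

lemma getElem?_subW_two_mul (w : List Bool) (i : ℕ) :
    (subW w)[2 * i]? = w[i]?.map fun _ => false := by
  induction w generalizing i with
  | nil => simp [subW]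
  | cons x w ih =>
    cases i with
    | zero => cases x <;> rfl
    | succ i => cases x <;> simpa [subW, sub, Nat.mul_succ] using ih i

lemma head?_subW (w : List Bool) : (subW w).head? = w.head?.map fun _ => false := by
  cases w with
  | nil => rfl
  | cons x w => cases x <;> rfl

lemma B_succ (n : ℕ) : B (n + 1) = subW (B n) :=
  Function.iterate_succ_apply' subW n [true]

lemma length_B (n : ℕ) : (B n).length = 2 ^ n := by
  induction n with
  | zero => rfl
  | succ n ih => rw [B_succ, length_subW, ih, pow_succ, mul_comm]

lemma B_ne_nil (n : ℕ) : B n ≠ [] :=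
  List.ne_nil_of_length_pos (by simp [length_B])

lemma head?_B_succ (n : ℕ) : (B (n + 1)).head? = some false := by
  obtain ⟨x, w, h⟩ := List.exists_cons_of_ne_nil (B_ne_nil n)
  rw [B_succ, head?_subW, h]
  rfl

lemma OccursIn.le_length {w τ : List Bool} {j : ℕ} (h : OccursIn w τ j) (hw : w ≠ []) :
    j - 1 + w.length ≤ τ.length := by
  have hlen := congrArg List.length h.2
  have := List.length_pos_iff.mpr hw
  simp only [List.length_take, List.length_drop] at hlen
  omega

instance (w τ : List Bool) : DecidablePred (OccursIn w τ) :=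
  fun _ => inferInstanceAs (Decidable (_ ∧ _))

lemma setOf_occursIn_eq_filter {w τ : List Bool} (hw : w ≠ []) :
    {j | OccursIn w τ j} = ↑({j ∈ Finset.range (τ.length + 1) | OccursIn w τ j}) := by
  ext j
  simp only [Set.mem_ofPred_eq, Finset.coe_filter, Finset.mem_range]
  exact ⟨fun h => ⟨by have := h.le_length hw; have := List.length_pos_iff.mpr hw; omega, h⟩,
    And.right⟩

-- `σ(W)` has an `a` at every odd position while `σ(u)` begins with `ab`, so an occurrence of
-- `σ(u)` in `σ(W)` starts at an odd position, aligned with the blocks `σ(x)`.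
lemma occursIn_subW_iff {u W : List Bool} (hu : u.head? = some false) (j : ℕ) :
    OccursIn (subW u) (subW W) j ↔ ∃ i, OccursIn u W i ∧ 2 * i - 1 = j := by
  obtain ⟨u', rfl⟩ := List.head?_eq_some_iff.mp hu
  constructor
  · rintro ⟨hj, hocc⟩
    have hb : (subW W)[j]? = some true := by
      have := congrArg (·[1]?) hocc
      simpa [List.getElem?_take, List.getElem?_drop, length_subW, Nat.sub_add_cancel hj,
        subW, sub] using this
    obtain ⟨i, rfl⟩ : ∃ i, j = 2 * i + 1 := by
      rcases Nat.even_or_odd' j with ⟨i, rfl | rfl⟩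
      · simp [getElem?_subW_two_mul] at hb
      · exact ⟨i, rfl⟩
    refine ⟨i + 1, ⟨by omega, subW_injective ?_⟩, by omega⟩
    rwa [Nat.add_sub_cancel, ← take_subW, ← drop_subW, ← length_subW]
  · rintro ⟨i, ⟨hi, hocc⟩, rfl⟩
    refine ⟨by omega, ?_⟩
    rw [show 2 * i - 1 - 1 = 2 * (i - 1) by omega, drop_subW, length_subW, take_subW, hocc]

lemma setOf_occursIn_subW {u W : List Bool} (hu : u.head? = some false) :
    {j | OccursIn (subW u) (subW W) j} = (fun i => 2 * i - 1) '' {i | OccursIn u W i} := by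
  ext j
  simp [occursIn_subW_iff hu]

lemma setOf_occursIn_B_of_subW {W : ℕ → List Bool} {c : ℕ} (hW : ∀ n, W (n + 1) = subW (W n))
    (h₀ : {j | OccursIn (B 1) (W 0) j} = {1, c + 1}) (n : ℕ) :
    {j | OccursIn (B (n + 1)) (W n) j} = {1, c * 2 ^ n + 1} := by
  induction n with
  | zero => simpa using h₀
  | succ n ih =>
    rw [hW, B_succ (n + 1), setOf_occursIn_subW (head?_B_succ n), ih, Set.image_pair, pow_succ]
    have : c * (2 ^ n * 2) = 2 * (c * 2 ^ n) := by ring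
    congr 2
    omega

end PD

open PD
/-- For every `m ≥ 2`: (1) `B m` occurs in `B m ++ B (m-1) ++ B (m+1) ++ B m` at
exactly the (1-indexed) positions `1` and `7·2^(m-1)+1`; (2) `B m` occurs in
`B m ++ B (m-1) ++ B m` at exactly the positions `1` and `3·2^(m-1)+1`. -/
theorem doubling_positions_B (m : ℕ) (hm : 2 ≤ m) :
    {j : ℕ | OccursIn (B m) (B m ++ B (m - 1) ++ B (m + 1) ++ B m) j}
        = {1, 7 * 2 ^ (m - 1) + 1} ∧
      {j : ℕ | OccursIn (B m) (B m ++ B (m - 1) ++ B m) j} = {1, 3 * 2 ^ (m - 1) + 1} := by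
  obtain ⟨n, rfl⟩ : ∃ n, m = n + 1 := ⟨m - 1, by omega⟩
  constructor
  · refine setOf_occursIn_B_of_subW (W := fun n => B (n + 1) ++ B n ++ B (n + 2) ++ B (n + 1))
      (fun n => by simp only [subW_append, ← B_succ]) ?_ n
    rw [setOf_occursIn_eq_filter (B_ne_nil 1), ← Finset.coe_pair, Finset.coe_inj]
    decide
  · refine setOf_occursIn_B_of_subW (W := fun n => B (n + 1) ++ B n ++ B (n + 1))
      (fun n => by simp only [subW_append, ← B_succ]) ?_ n
    rw [setOf_occursIn_eq_filter (B_ne_nil 1), ← Finset.coe_pair, Finset.coe_inj]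
    decide
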